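/- Let A be a two-sided brace and fix a ∈ A. Then the map k: A → A defined by k(x) = x*a is a reflection of the solution (A, r_A), where r_A(x,y) = (λ_x(y), μ_y(x)). -/
import Mathlib


/-- A left brace structure on an additive abelian group: a group operation
`circ` (with inverse `inv`, whose identity is 0) satisfying the left brace
compatibility a∘(b+c) = a∘b - a + a∘c. -/
structure LeftBrace (A : Type*) [AddCommGroup A] where
  circ : A → A → A
  inv : A → A
  circ_assoc : ∀ a b c, circ (circ a b) c = circ a (circ b c)
  circ_zero : ∀ a, circ a 0 = a
  zero_circ : ∀ a, circ 0 a = a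
  circ_inv : ∀ a, circ a (inv a) = 0
  inv_circ : ∀ a, circ (inv a) a = 0
  compat : ∀ a b c, circ a (b + c) = circ a b - a + circ a c

namespace LeftBrace

variable {A : Type*} [AddCommGroup A] (B : LeftBrace A)

/-- λ_a(b) = -a + a∘b. -/
def lam (a b : A) : A := -a + B.circ a b

/-- a*b = λ_a(b) - b. -/
def star (a b : A) : A := B.lam a b - b

/-- μ_b(a) = λ_a(b)ʹ ∘ a ∘ b. -/
def mu (b a : A) : A := B.circ (B.inv (B.lam a b)) (B.circ a b)

/-- A left brace is two-sided if (a+b)∘c = a∘c - c + b∘c. -/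
def IsTwoSided : Prop := ∀ a b c : A, B.circ (a + b) c = B.circ a c - c + B.circ b c

/-- The Yang–Baxter map r_A(a,b) = (λ_a(b), μ_b(a)) associated to a left brace. -/
def rmap : A × A → A × A := fun p => (B.lam p.1 p.2, B.mu p.2 p.1)

/-- `r × id` acting on triples. -/
def r1map {X : Type*} (r : X × X → X × X) : X × X × X → X × X × X :=
  fun p => ((r (p.1, p.2.1)).1, (r (p.1, p.2.1)).2, p.2.2)

/-- `id × r` acting on triples. -/
def r2map {X : Type*} (r : X × X → X × X) : X × X × X → X × X × X :=
  fun p => (p.1, r p.2)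

/-- `id × k` on pairs. -/
def k2map {X : Type*} (k : X → X) : X × X → X × X := fun p => (p.1, k p.2)

/-- `k × id` on pairs. -/
def k1map {X : Type*} (k : X → X) : X × X → X × X := fun p => (k p.1, p.2)

end LeftBrace

open LeftBrace

section Aux

variable {A : Type*} [AddCommGroup A] (B : LeftBrace A)

lemma aux_lam_eq (x y : A) : B.lam x y = y + B.star x y := by
  unfold LeftBrace.star; abel

lemma aux_circ_eq (x y : A) : B.circ x y = x + y + B.star x y := by
  unfold LeftBrace.star LeftBrace.lam; abel

lemma aux_ldistrib (x y z : A) :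
    B.star x (y + z) = B.star x y + B.star x z := by
  unfold LeftBrace.star LeftBrace.lam
  rw [B.compat]; abel

lemma aux_rdistrib (hB : B.IsTwoSided) (x y z : A) :
    B.star (x + y) z = B.star x z + B.star y z := by
  unfold LeftBrace.star LeftBrace.lam
  rw [hB]; abel

lemma aux_star_assoc (hB : B.IsTwoSided) (x y z : A) :
    B.star (B.star x y) z = B.star x (B.star y z) := by
  have h : B.circ (B.circ x y) z - B.circ x (B.circ y z)
      = B.star (B.star x y) z - B.star x (B.star y z) := by
    rw [aux_circ_eq B x y, aux_circ_eq B y z, aux_circ_eq, aux_circ_eq,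
      aux_rdistrib B hB, aux_rdistrib B hB, aux_ldistrib, aux_ldistrib]
    abel
  rw [B.circ_assoc, sub_self] at h
  exact (sub_eq_zero.mp h.symm)

lemma aux_mu_spec (x y : A) :
    B.mu y x + B.star (B.lam x y) (B.mu y x) = x := by
  have hcirc : B.circ (B.lam x y) (B.mu y x) = B.circ x y := by
    unfold LeftBrace.mu
    rw [← B.circ_assoc, B.circ_inv, B.zero_circ]
  have h2 : B.circ (B.lam x y) (B.mu y x) - B.circ x y
      = (B.mu y x + B.star (B.lam x y) (B.mu y x)) - x := by
    rw [aux_circ_eq, aux_circ_eq, aux_lam_eq]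
    abel
  rw [hcirc, sub_self] at h2
  exact sub_eq_zero.mp h2.symm

lemma aux_cancel (t z z' : A)
    (h : z + B.star t z = z' + B.star t z') : z = z' := by
  have e : ∀ w : A, w + B.star t w = B.lam t w := fun w => by
    unfold LeftBrace.star; abel
  rw [e, e] at h
  have h2 : B.circ t z = B.circ t z' := by
    have := congrArg (t + ·) h
    simpa [LeftBrace.lam] using this
  have e2 : ∀ w : A, B.circ (B.inv t) (B.circ t w) = w := fun w => by
    rw [← B.circ_assoc, B.inv_circ, B.zero_circ]
  calc z = B.circ (B.inv t) (B.circ t z) := (e2 z).symm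
    _ = B.circ (B.inv t) (B.circ t z') := by rw [h2]
    _ = z' := e2 z'

lemma aux_lam_k (hB : B.IsTwoSided) (x y c : A) :
    B.lam x (B.star y c) = B.star (B.lam x y) c := by
  rw [aux_lam_eq, ← aux_star_assoc B hB, ← aux_rdistrib B hB, ← aux_lam_eq]

end Aux


/-- Corollary 2.6: in a two-sided brace A, for fixed a the map k(x) = x*a
is a reflection of (A, r_A). -/
theorem statement8 {A : Type*} [AddCommGroup A] (B : LeftBrace A)
    (hB : B.IsTwoSided) (a : A) :
    B.rmap ∘ k2map (fun x => B.star x a) ∘ B.rmap ∘ k2map (fun x => B.star x a) =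
      k2map (fun x => B.star x a) ∘ B.rmap ∘ k2map (fun x => B.star x a) ∘ B.rmap := by
  funext p
  obtain ⟨x, y⟩ := p
  simp only [Function.comp, k2map, rmap]
  set u := B.lam x y with hu
  set v := B.mu y x with hvdef
  set u1 := B.lam x (B.star y a) with hu1def
  set v1 := B.mu (B.star y a) x with hv1def
  have hu1 : u1 = B.star u a := aux_lam_k B hB x y a
  have hv : v + B.star u v = x := aux_mu_spec B x y
  have hv1 : v1 + B.star u1 v1 = x := aux_mu_spec B x (B.star y a)
  -- first components
  have hfst1 : B.lam u1 (B.star v1 a) = B.star x a := by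
    rw [aux_lam_eq, ← aux_star_assoc B hB, ← aux_rdistrib B hB, hv1]
  have hfst2 : B.lam u (B.star v a) = B.star x a := by
    rw [aux_lam_eq, ← aux_star_assoc B hB, ← aux_rdistrib B hB, hv]
  -- second components
  have hw : B.mu (B.star v1 a) u1 + B.star (B.star x a) (B.mu (B.star v1 a) u1) = B.star u a := by
    have := aux_mu_spec B u1 (B.star v1 a)
    rw [hfst1] at this
    rw [this, hu1]
  have hw' : B.mu (B.star v a) u + B.star (B.star x a) (B.mu (B.star v a) u) = u := by
    have := aux_mu_spec B u (B.star v a)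
    rw [hfst2] at this
    exact this
  have hsnd : B.mu (B.star v1 a) u1 = B.star (B.mu (B.star v a) u) a := by
    apply aux_cancel B (B.star x a)
    rw [hw, ← aux_star_assoc B hB, ← aux_rdistrib B hB, hw']
  simp only [Prod.mk.injEq]
  exact ⟨by rw [hfst1, hfst2], hsnd⟩
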